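/- arXiv:1405.4784 — 2 statements merged into one kernel-verified Lean document; each statement's English description precedes it below -/
import Mathlib

section
/- For every positive integer n, d(n²) = ∑_{d : d² | n} μ(d)·d₃(n/d²), where the sum runs over all positive integers d whose square divides n. -/
/-!
Both sides are multiplicative in `n`: the right-hand side is the Dirichlet convolution of
`d₃ = ζ³` with `m ↦ μ(√m)` (zero off the squares), so the identity is the coefficientwise
form of `∑ d(n²) n⁻ˢ = ζ(s)³ / ζ(2s)`. On a prime power `p ^ k` it reads
`d₃(p^k) - d₃(p^(k-2)) = C(k+2, 2) - C(k, 2) = 2k + 1 = d(p^(2k))`.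
-/

/-- `d₃(n)`: the number of ordered triples `(d₁, d₂, d₃)` of positive integers with
`d₁·d₂·d₃ = n`. -/
def d3 (n : ℕ) : ℕ :=
  ((n.divisors ×ˢ n.divisors ×ˢ n.divisors).filter
    fun p => p.1 * p.2.1 * p.2.2 = n).card

open ArithmeticFunction Finset
open scoped ArithmeticFunction.zeta ArithmeticFunction.Moebius ArithmeticFunction.sigma

lemma Nat.Coprime.isSquare_mul_iff {m n : ℕ} (h : m.Coprime n) :
    IsSquare (m * n) ↔ IsSquare m ∧ IsSquare n := by
  refine ⟨fun ⟨c, hc⟩ => ?_, fun ⟨hm, hn⟩ => hm.mul hn⟩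
  obtain ⟨a, ha⟩ := exists_eq_pow_of_mul_eq_pow (Nat.isUnit_iff.mpr h) (k := 2)
    (by rw [hc, sq])
  obtain ⟨b, hb⟩ := exists_eq_pow_of_mul_eq_pow (Nat.isUnit_iff.mpr h.symm) (k := 2)
    (by rw [mul_comm, hc, sq])
  exact ⟨⟨a, by rw [ha, sq]⟩, ⟨b, by rw [hb, sq]⟩⟩

lemma Nat.Prime.isSquare_pow_iff {p i : ℕ} (hp : p.Prime) : IsSquare (p ^ i) ↔ Even i := by
  refine ⟨fun ⟨c, hc⟩ => ?_, fun hi => hi.isSquare_pow p⟩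
  obtain ⟨j, -, rfl⟩ := (Nat.dvd_prime_pow hp).mp (Dvd.intro c hc.symm)
  rw [← pow_add] at hc
  exact ⟨j, Nat.pow_right_injective hp.two_le hc⟩

namespace ArithmeticFunction

variable {R : Type*}

def onSquares [Zero R] (f : ArithmeticFunction R) : ArithmeticFunction R :=
  ⟨fun n => if IsSquare n then f n.sqrt else 0, by simp⟩

@[simp]
lemma onSquares_apply_sq [Zero R] (f : ArithmeticFunction R) (d : ℕ) :
    f.onSquares (d ^ 2) = f d := by
  simp [onSquares, Nat.sqrt_eq', IsSquare.sq]

lemma onSquares_apply_of_not_isSquare [Zero R] (f : ArithmeticFunction R) {n : ℕ}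
    (h : ¬IsSquare n) : f.onSquares n = 0 :=
  if_neg h

lemma IsMultiplicative.onSquares [MonoidWithZero R] {f : ArithmeticFunction R}
    (hf : f.IsMultiplicative) : f.onSquares.IsMultiplicative := by
  refine ⟨by simpa [hf.map_one] using onSquares_apply_sq f 1, fun {m n} hmn => ?_⟩
  by_cases hsq : IsSquare m ∧ IsSquare n
  · obtain ⟨⟨a, rfl⟩, ⟨b, rfl⟩⟩ := hsq
    simp only [← sq, ← mul_pow, onSquares_apply_sq]
    exact hf.map_mul_of_coprime hmn.coprime_mul_left.coprime_mul_left_right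
  · rw [onSquares_apply_of_not_isSquare f (hmn.isSquare_mul_iff.not.mpr hsq)]
    rcases not_and_or.mp hsq with h | h <;> simp [onSquares_apply_of_not_isSquare f h]

lemma onSquares_apply_prime_pow [Zero R] (f : ArithmeticFunction R) {p i : ℕ} (hp : p.Prime) :
    f.onSquares (p ^ i) = if Even i then f (p ^ (i / 2)) else 0 := by
  split_ifs with hi
  · rw [← Nat.two_mul_div_two_of_even hi, pow_mul', onSquares_apply_sq,
      Nat.mul_div_cancel_left _ two_pos]
  · exact onSquares_apply_of_not_isSquare f (hp.isSquare_pow_iff.not.mpr hi)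

lemma onSquares_mul_apply [Semiring R] (f h : ArithmeticFunction R) (n : ℕ) :
    (f.onSquares * h) n = ∑ d ∈ n.divisors with d ^ 2 ∣ n, f d * h (n / d ^ 2) := by
  have hsub : (n.divisors.filter (· ^ 2 ∣ n)).image (· ^ 2) ⊆ n.divisors := by
    simp only [subset_iff, mem_image, mem_filter, Nat.mem_divisors]
    rintro _ ⟨d, ⟨⟨-, hn⟩, hd⟩, rfl⟩
    exact ⟨hd, hn⟩
  have hvanish : ∀ e ∈ n.divisors, e ∉ (n.divisors.filter (· ^ 2 ∣ n)).image (· ^ 2) →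
      f.onSquares e * h (n / e) = 0 := by
    rintro e he hnot
    rw [onSquares_apply_of_not_isSquare, zero_mul]
    rintro ⟨d, rfl⟩
    obtain ⟨hdn, hn⟩ := Nat.mem_divisors.mp he
    rw [← sq] at hdn
    exact hnot (mem_image.mpr ⟨d, mem_filter.mpr
      ⟨Nat.mem_divisors.mpr ⟨(dvd_pow_self d two_ne_zero).trans hdn, hn⟩, hdn⟩, sq d⟩)
  calc (f.onSquares * h) n = ∑ e ∈ n.divisors, f.onSquares e * h (n / e) := by
        rw [mul_apply, Nat.sum_divisorsAntidiagonal fun a b => f.onSquares a * h b]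
    _ = ∑ e ∈ (n.divisors.filter (· ^ 2 ∣ n)).image (· ^ 2), f.onSquares e * h (n / e) :=
        (sum_subset hsub hvanish).symm
    _ = ∑ d ∈ n.divisors with d ^ 2 ∣ n, f d * h (n / d ^ 2) := by
        rw [sum_image fun a _ b _ hab => Nat.pow_left_injective two_ne_zero hab]
        simp only [onSquares_apply_sq]

lemma mul_apply_prime_pow [Semiring R] (f h : ArithmeticFunction R) {p : ℕ} (hp : p.Prime)
    (k : ℕ) : (f * h) (p ^ k) = ∑ i ∈ range (k + 1), f (p ^ i) * h (p ^ (k - i)) := by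
  rw [mul_apply, Nat.sum_divisorsAntidiagonal fun a b => f a * h b, Nat.sum_divisors_prime_pow hp]
  refine sum_congr rfl fun i hi => ?_
  rw [Nat.pow_div (Nat.lt_succ_iff.mp (mem_range.mp hi)) hp.pos]

lemma moebius_onSquares_apply_prime_pow {p i : ℕ} (hp : p.Prime) :
    onSquares μ (p ^ i) = (if i = 0 then 1 else 0) - if i = 2 then 1 else 0 := by
  rw [onSquares_apply_prime_pow μ hp]
  rcases Nat.even_or_odd' i with ⟨j, rfl | rfl⟩
  · rcases eq_or_ne j 0 with rfl | hj
    · simp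
    · by_cases h1 : j = 1 <;> simp [hj, h1, moebius_apply_prime hp, moebius_apply_prime_pow hp hj]
  · simp

lemma moebius_onSquares_mul_apply_prime_pow (f : ArithmeticFunction ℤ) {p : ℕ} (hp : p.Prime)
    (k : ℕ) :
    (onSquares μ * f) (p ^ k) = f (p ^ k) - if 2 ≤ k then f (p ^ (k - 2)) else 0 := by
  simp [mul_apply_prime_pow _ _ hp, moebius_onSquares_apply_prime_pow hp, sub_mul, ite_mul,
    sum_sub_distrib]

lemma zeta_pow_three_eq : (ζ ^ 3 : ArithmeticFunction ℕ) = ζ * σ 0 := by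
  rw [← zeta_mul_pow_eq_sigma, pow_zero_eq_zeta, pow_succ', sq]

lemma zeta_pow_three_apply_prime_pow {p : ℕ} (hp : p.Prime) (k : ℕ) :
    (ζ ^ 3 : ArithmeticFunction ℕ) (p ^ k) = (k + 2).choose 2 := by
  rw [zeta_pow_three_eq, zeta_mul_apply, Nat.sum_divisors_prime_pow hp]
  simp_rw [sigma_zero_apply_prime_pow hp]
  induction k with
  | zero => rfl
  | succ k ih =>
    rw [sum_range_succ, ih, Nat.choose_succ_succ' (k + 2), Nat.choose_one_right, add_comm]

end ArithmeticFunction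

/- Fibre the triples `(a, b, c)` over `i = a * b`: the fibre over `i ∣ n` is
`{(a, i / a, n / i) | a ∣ i}`. -/
lemma d3_eq_sum_card_divisors (n : ℕ) : d3 n = ∑ i ∈ n.divisors, #i.divisors := by
  unfold d3
  rw [card_eq_sum_card_fiberwise (f := fun t => t.1 * t.2.1) (t := n.divisors) ?maps]
  case maps =>
    rintro ⟨a, b, c⟩ ht
    simp only [coe_filter, mem_product, Nat.mem_divisors, Set.mem_ofPred_eq] at ht
    obtain ⟨⟨-, -, -, hn⟩, rfl⟩ := ht
    exact Nat.mem_divisors.mpr ⟨Dvd.intro c rfl, hn⟩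
  refine sum_congr rfl fun i hi => ?_
  obtain ⟨⟨c, rfl⟩, hn⟩ := Nat.mem_divisors.mp hi
  have hi0 : i ≠ 0 := left_ne_zero_of_mul hn
  refine card_bij' (fun t _ => t.1) (fun a _ => (a, i / a, c)) ?_ ?_ ?_ (fun _ _ => rfl)
  · simp only [mem_filter, mem_product, Nat.mem_divisors]
    rintro ⟨a, b, c'⟩ ⟨-, rfl⟩
    exact ⟨Dvd.intro b rfl, hi0⟩
  · simp only [mem_filter, mem_product, Nat.mem_divisors]
    rintro a ⟨⟨b, rfl⟩, -⟩
    rw [Nat.mul_div_cancel_left b (Nat.pos_of_ne_zero (left_ne_zero_of_mul hi0))]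
    refine ⟨⟨⟨⟨?_, hn⟩, ⟨?_, hn⟩, ⟨?_, hn⟩⟩, by ring⟩, rfl⟩
    exacts [⟨b * c, by ring⟩, ⟨a * c, by ring⟩, ⟨a * b, by ring⟩]
  · simp only [mem_filter, mem_product, Nat.mem_divisors]
    rintro ⟨a, b, c'⟩ ⟨⟨-, habc⟩, rfl⟩
    have hc : c' = c := Nat.eq_of_mul_eq_mul_left (Nat.pos_of_ne_zero hi0) habc
    simp [Nat.mul_div_cancel_left b (Nat.pos_of_ne_zero (left_ne_zero_of_mul hi0)), hc]

lemma zeta_pow_three_apply_eq_d3 (n : ℕ) : (ζ ^ 3 : ArithmeticFunction ℕ) n = d3 n := by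
  simp only [zeta_pow_three_eq, zeta_mul_apply, sigma_zero_apply, d3_eq_sum_card_divisors]

def cardDivisorsSq : ArithmeticFunction ℤ :=
  ⟨fun n => #(n ^ 2).divisors, by simp⟩

lemma cardDivisorsSq_apply (n : ℕ) : cardDivisorsSq n = #(n ^ 2).divisors := rfl

lemma isMultiplicative_cardDivisorsSq : cardDivisorsSq.IsMultiplicative := by
  refine ⟨by simp [cardDivisorsSq_apply], fun {m n} hmn => ?_⟩
  simp only [cardDivisorsSq_apply, mul_pow, (hmn.pow 2 2).card_divisors_mul, Nat.cast_mul]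

lemma cardDivisorsSq_apply_prime_pow {p : ℕ} (hp : p.Prime) (k : ℕ) :
    cardDivisorsSq (p ^ k) = 2 * k + 1 := by
  rw [cardDivisorsSq_apply, ← pow_mul, ← sigma_zero_apply, sigma_zero_apply_prime_pow hp]
  push_cast; ring

lemma moebius_onSquares_mul_zeta_pow_three_apply_prime_pow {p : ℕ} (hp : p.Prime) (k : ℕ) :
    (onSquares μ * ↑(ζ ^ 3 : ArithmeticFunction ℕ)) (p ^ k) = 2 * k + 1 := by
  rw [moebius_onSquares_mul_apply_prime_pow _ hp]
  simp only [natCoe_apply, zeta_pow_three_apply_prime_pow hp]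
  rcases lt_or_ge k 2 with hk | hk
  · interval_cases k <;> simp
  · obtain ⟨j, rfl⟩ := Nat.exists_eq_add_of_le' hk
    rw [if_pos hk, Nat.add_sub_cancel, Nat.choose_succ_succ' (j + 3) 1,
      Nat.choose_succ_succ' (j + 2) 1, Nat.choose_one_right, Nat.choose_one_right]
    push_cast
    ring

theorem cardDivisorsSq_eq_moebius_onSquares_mul_zeta_pow_three :
    cardDivisorsSq = onSquares μ * ↑(ζ ^ 3 : ArithmeticFunction ℕ) :=
  (IsMultiplicative.eq_iff_eq_on_prime_powers _ isMultiplicative_cardDivisorsSq _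
    (isMultiplicative_moebius.onSquares.mul isMultiplicative_zeta.pow.natCast)).mpr
    fun _ k hp => by
      rw [cardDivisorsSq_apply_prime_pow hp,
        moebius_onSquares_mul_zeta_pow_three_apply_prime_pow hp]

theorem divisor_of_sq_eq_sum_moebius_d3_general (n : ℕ) :
    (((n ^ 2).divisors.card : ℤ)) =
      ∑ d ∈ n.divisors.filter (fun d => d ^ 2 ∣ n),
        ArithmeticFunction.moebius d * (d3 (n / d ^ 2) : ℤ) := by
  have h := congr($cardDivisorsSq_eq_moebius_onSquares_mul_zeta_pow_three n)
  rw [cardDivisorsSq_apply, onSquares_mul_apply] at h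
  simpa only [natCoe_apply, zeta_pow_three_apply_eq_d3] using h

/-- For every positive integer `n`,
`d(n²) = ∑_{d² ∣ n} μ(d)·d₃(n/d²)`, the sum running over positive integers `d` whose
square divides `n`. -/
theorem divisor_of_sq_eq_sum_moebius_d3 (n : ℕ) (hn : 0 < n) :
    (((n ^ 2).divisors.card : ℤ)) =
      ∑ d ∈ n.divisors.filter (fun d => d ^ 2 ∣ n),
        ArithmeticFunction.moebius d * (d3 (n / d ^ 2) : ℤ) :=
  divisor_of_sq_eq_sum_moebius_d3_general n
end

section
/- There exists a constant C > 0 such that for all sufficiently large real x, |∑_{n ≤ x} d(n) − x·log x − (2γ − 1)·x| ≤ C·x^{1/2}. -/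
/-! Dirichlet's hyperbola method: `∑_{n ≤ N} d(n)` counts the lattice points `(a, b)` with
`a, b ≥ 1` and `ab ≤ N`. Every such point has `a ≤ K` or `b ≤ K` for `K = ⌊√N⌋`, and both when it
lies in the square `[1, K]²`, so by the symmetry `(a, b) ↦ (b, a)` the count is
`2 ∑_{a ≤ K} ⌊N/a⌋ - K²`. Dropping the floors costs `O(K)`, `H_K = log K + γ + O(1/K)` and
`log N = 2 log K + O(1/K)`, so the error is `O(K) = O(√N)`. Passing from `⌊x⌋` to `x` costs only
`O(log x)`. -/

open Filter Finset Real

def hyperbolaPoints (N : ℕ) : Finset (ℕ × ℕ) :=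
  {x ∈ Icc 1 N ×ˢ Icc 1 N | x.1 * x.2 ≤ N}

lemma mem_hyperbolaPoints {N : ℕ} {x : ℕ × ℕ} :
    x ∈ hyperbolaPoints N ↔ 1 ≤ x.1 ∧ 1 ≤ x.2 ∧ x.1 * x.2 ≤ N := by
  simp only [hyperbolaPoints, mem_filter, mem_product, mem_Icc]
  constructor
  · rintro ⟨⟨⟨h₁, -⟩, h₂, -⟩, h⟩
    exact ⟨h₁, h₂, h⟩
  · rintro ⟨h₁, h₂, h⟩
    exact ⟨⟨⟨h₁, (Nat.le_mul_of_pos_right _ h₂).trans h⟩, h₂,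
      (Nat.le_mul_of_pos_left _ h₁).trans h⟩, h⟩

lemma card_hyperbolaPoints_filter_fst_le (N K : ℕ) :
    #{x ∈ hyperbolaPoints N | x.1 ≤ K} = ∑ a ∈ Icc 1 K, N / a := by
  rw [card_eq_sum_card_fiberwise (f := Prod.fst) (t := Icc 1 K) fun x hx => by
    rw [mem_coe, mem_filter, mem_hyperbolaPoints] at hx
    exact mem_Icc.2 ⟨hx.1.1, hx.2⟩]
  refine sum_congr rfl fun a haK => ?_
  have ha : 1 ≤ a := (mem_Icc.1 haK).1
  have hfiber : {x ∈ {x ∈ hyperbolaPoints N | x.1 ≤ K} | x.1 = a} = {a} ×ˢ Icc 1 (N / a) := by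
    ext ⟨b, c⟩
    simp only [mem_filter, mem_hyperbolaPoints, mem_product, mem_singleton, mem_Icc,
      Nat.le_div_iff_mul_le ha]
    constructor
    · rintro ⟨⟨⟨-, hc, h⟩, -⟩, rfl⟩
      exact ⟨rfl, hc, by rwa [mul_comm]⟩
    · rintro ⟨rfl, hc, h⟩
      exact ⟨⟨⟨ha, hc, by rwa [mul_comm]⟩, (mem_Icc.1 haK).2⟩, rfl⟩
  simp [hfiber]

lemma card_hyperbolaPoints_filter_snd_le (N K : ℕ) :
    #{x ∈ hyperbolaPoints N | x.2 ≤ K} = #{x ∈ hyperbolaPoints N | x.1 ≤ K} :=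
  card_nbij' Prod.swap Prod.swap
    (fun x hx => by simp_all [mem_hyperbolaPoints, mul_comm])
    (fun x hx => by simp_all [mem_hyperbolaPoints, mul_comm])
    (fun _ _ => rfl) (fun _ _ => rfl)

theorem sum_Icc_card_divisors_eq_card_hyperbolaPoints (N : ℕ) :
    ∑ n ∈ Icc 1 N, #n.divisors = #(hyperbolaPoints N) := by
  have hall : {x ∈ hyperbolaPoints N | x.1 ≤ N} = hyperbolaPoints N :=
    filter_true_of_mem fun x hx => (mem_Icc.1 (mem_product.1 (mem_filter.1 hx).1).1).2
  rw [← hall, card_hyperbolaPoints_filter_fst_le]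
  have h := ArithmeticFunction.sum_Ioc_sigma0_eq_sum_div N
  simp only [ArithmeticFunction.sigma_zero_apply, ← Icc_add_one_left_eq_Ioc, zero_add] at h
  exact h

theorem sum_Icc_card_divisors_add_sqrt_mul_sqrt (N : ℕ) :
    ∑ n ∈ Icc 1 N, #n.divisors + N.sqrt * N.sqrt = 2 * ∑ a ∈ Icc 1 N.sqrt, N / a := by
  set K := N.sqrt
  have hunion : {x ∈ hyperbolaPoints N | x.1 ≤ K} ∪ {x ∈ hyperbolaPoints N | x.2 ≤ K} =
      hyperbolaPoints N := by
    rw [← filter_or]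
    refine filter_true_of_mem fun x hx => ?_
    have hlt : N < (K + 1) * (K + 1) := Nat.lt_succ_sqrt N
    by_contra! h
    exact (mem_hyperbolaPoints.1 hx).2.2.not_gt (hlt.trans_le (Nat.mul_le_mul h.1 h.2))
  have hinter : {x ∈ hyperbolaPoints N | x.1 ≤ K} ∩ {x ∈ hyperbolaPoints N | x.2 ≤ K} =
      Icc 1 K ×ˢ Icc 1 K := by
    ext x
    simp only [← filter_and, mem_filter, mem_hyperbolaPoints, mem_product, mem_Icc]
    constructor
    · rintro ⟨⟨h₁, h₂, -⟩, hK₁, hK₂⟩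
      exact ⟨⟨h₁, hK₁⟩, h₂, hK₂⟩
    · rintro ⟨⟨h₁, hK₁⟩, h₂, hK₂⟩
      exact ⟨⟨h₁, h₂, (Nat.mul_le_mul hK₁ hK₂).trans (Nat.sqrt_le N)⟩, hK₁, hK₂⟩
  have h := card_union_add_card_inter {x ∈ hyperbolaPoints N | x.1 ≤ K}
    {x ∈ hyperbolaPoints N | x.2 ≤ K}
  rw [hunion, hinter, card_hyperbolaPoints_filter_snd_le, card_hyperbolaPoints_filter_fst_le,
    card_product, Nat.card_Icc, Nat.add_sub_cancel] at h
  rw [sum_Icc_card_divisors_eq_card_hyperbolaPoints]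
  omega

lemma log_add_one_sub_log_le {k : ℝ} (hk : 0 < k) : log (k + 1) - log k ≤ 1 / k := by
  have h := log_le_sub_one_of_pos (show 0 < (k + 1) / k by positivity)
  rwa [log_div (by positivity) hk.ne', add_div, div_self hk.ne', add_sub_cancel_left] at h

lemma harmonic_sub_log_mem_Icc {n : ℕ} (hn : n ≠ 0) :
    (harmonic n : ℝ) - log n ∈
      Set.Icc eulerMascheroniConstant (eulerMascheroniConstant + 1 / n) := by
  have hlower := eulerMascheroniConstant_lt_eulerMascheroniSeq' n
  have hupper := eulerMascheroniSeq_lt_eulerMascheroniConstant n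
  rw [eulerMascheroniSeq', if_neg hn] at hlower
  rw [eulerMascheroniSeq] at hupper
  have := log_add_one_sub_log_le (show (0 : ℝ) < n by positivity)
  constructor <;> linarith

lemma sum_Icc_div_mem_Icc (N K : ℕ) :
    ((∑ a ∈ Icc 1 K, N / a : ℕ) : ℝ) ∈
      Set.Icc (N * (harmonic K : ℝ) - K) (N * (harmonic K : ℝ)) := by
  have hharmonic : (N : ℝ) * harmonic K = ∑ a ∈ Icc 1 K, (N : ℝ) / a := by
    simp [harmonic_eq_sum_Icc, mul_sum, div_eq_mul_inv]
  have hfloor (a : ℕ) : ((N / a : ℕ) : ℝ) = ⌊(N : ℝ) / a⌋₊ := by rw [Nat.floor_div_eq_div]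
  push_cast
  rw [hharmonic]
  constructor
  · have := sum_le_sum fun a (_ : a ∈ Icc 1 K) => (Nat.sub_one_lt_floor ((N : ℝ) / a)).le
    simpa [sum_sub_distrib, hfloor] using this
  · exact sum_le_sum fun a _ => hfloor a ▸ Nat.floor_le (by positivity)

lemma log_mem_Icc_of_sq_le {k n : ℝ} (hk : 0 < k) (hkn : k ^ 2 ≤ n) (hnk : n ≤ (k + 1) ^ 2) :
    log n ∈ Set.Icc (2 * log k) (2 * log k + 2 / k) := by
  have hlog := log_add_one_sub_log_le hk
  constructor
  · simpa [log_pow] using log_le_log (pow_pos hk 2) hkn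
  · have := log_le_log ((pow_pos hk 2).trans_le hkn) hnk
    rw [log_pow] at this
    push_cast at this
    linarith [show 2 / k = 2 * (1 / k) by ring]

theorem abs_sum_Icc_card_divisors_sub_le {N : ℕ} (hN : 1 ≤ N) :
    |∑ n ∈ Icc 1 N, (#n.divisors : ℝ) - N * log N - (2 * eulerMascheroniConstant - 1) * N| ≤
      11 * N.sqrt := by
  set K := N.sqrt
  have hK : K ≠ 0 := (Nat.sqrt_pos.2 hN).ne'
  have hk : (1 : ℝ) ≤ K := by exact_mod_cast Nat.one_le_iff_ne_zero.2 hK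
  have hkn : (K : ℝ) ^ 2 ≤ N := by exact_mod_cast Nat.sqrt_le' N
  have hnk : (N : ℝ) ≤ (K + 1) ^ 2 := by exact_mod_cast (Nat.lt_succ_sqrt' N).le
  have hcount : ∑ n ∈ Icc 1 N, (#n.divisors : ℝ) + K * K =
      2 * ((∑ a ∈ Icc 1 K, N / a : ℕ) : ℝ) := by
    exact_mod_cast sum_Icc_card_divisors_add_sqrt_mul_sqrt N
  obtain ⟨hsum₁, hsum₂⟩ := sum_Icc_div_mem_Icc N K
  obtain ⟨hharm₁, hharm₂⟩ := harmonic_sub_log_mem_Icc hK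
  obtain ⟨hlog₁, hlog₂⟩ := log_mem_Icc_of_sq_le (by positivity) hkn hnk
  have hNK : (N : ℝ) / K ≤ K + 3 := by
    rw [div_le_iff₀ (by positivity)]
    nlinarith
  have hN0 : (0 : ℝ) ≤ N := by positivity
  have hH₁ := mul_le_mul_of_nonneg_left hharm₁ hN0
  have hH₂ := mul_le_mul_of_nonneg_left hharm₂ hN0
  have hL₁ := mul_le_mul_of_nonneg_left hlog₁ hN0
  have hL₂ := mul_le_mul_of_nonneg_left hlog₂ hN0
  have hdiv : (N : ℝ) * (2 / K) = 2 * (N / K) := by ring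
  have hdiv' : (N : ℝ) * (1 / K) = N / K := by ring
  rw [abs_le]
  constructor <;> linarith

lemma abs_mul_log_sub_mul_log_le {n x : ℝ} (hn : 1 ≤ n) (hnx : n ≤ x) (hxn : x ≤ n + 1) :
    |n * log n - x * log x| ≤ 1 + log x := by
  have hn0 : 0 < n := by linarith
  have hmono : n * log n ≤ x * log x :=
    mul_le_mul hnx (log_le_log hn0 hnx) (log_nonneg hn) (by linarith)
  have hlog : n * (log x - log n) ≤ x - n := by
    have h := log_le_sub_one_of_pos (div_pos (hn0.trans_le hnx) hn0)
    rw [log_div (by linarith) hn0.ne'] at h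
    calc n * (log x - log n) ≤ n * (x / n - 1) := mul_le_mul_of_nonneg_left h hn0.le
      _ = x - n := by field_simp
  have hxlog : (x - n) * log x ≤ 1 * log x :=
    mul_le_mul_of_nonneg_right (by linarith) (log_nonneg (hn.trans hnx))
  rw [abs_sub_comm, abs_of_nonneg (by linarith)]
  linarith

/-- There is a constant `C > 0` such that for all sufficiently large
real `x`, `|∑_{n ≤ x} d(n) − x log x − (2γ − 1)x| ≤ C x^{1/2}`. -/
theorem divisor_summatory_dirichlet :
    ∃ C : ℝ, 0 < C ∧ ∀ᶠ x : ℝ in atTop,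
      |(∑ n ∈ Finset.Icc 1 ⌊x⌋₊, (n.divisors.card : ℝ)) - x * Real.log x -
        (2 * Real.eulerMascheroniConstant - 1) * x| ≤ C * x ^ ((1 : ℝ) / 2) := by
  refine ⟨14, by norm_num, ?_⟩
  filter_upwards [eventually_ge_atTop 1] with x hx
  set N := ⌊x⌋₊
  set γ := eulerMascheroniConstant
  have hNx : (N : ℝ) ≤ x := Nat.floor_le (by linarith)
  have hxN : x ≤ N + 1 := (Nat.lt_floor_add_one x).le
  have hN : 1 ≤ N := Nat.one_le_floor_iff x |>.2 hx
  have hsum := abs_sum_Icc_card_divisors_sub_le hN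
  have hmul_log := abs_mul_log_sub_mul_log_le (by exact_mod_cast hN) hNx hxN
  have hsqrt : (N.sqrt : ℝ) ≤ √x := nat_sqrt_le_real_sqrt.trans (sqrt_le_sqrt hNx)
  have hlog : log x ≤ 2 * √x - 2 := by
    have h := log_le_sub_one_of_pos (sqrt_pos.2 (by linarith : 0 < x))
    rw [log_sqrt (by linarith)] at h
    linarith
  have hone : 1 ≤ √x := one_le_sqrt.2 hx
  have hγ : |(2 * γ - 1) * (N - x)| ≤ 1 := by
    have := one_half_lt_eulerMascheroniConstant
    have := eulerMascheroniConstant_lt_two_thirds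
    rw [abs_le]
    constructor <;> nlinarith
  rw [← sqrt_eq_rpow]
  calc _ = |(∑ n ∈ Icc 1 N, (#n.divisors : ℝ) - N * log N - (2 * γ - 1) * N) +
        (N * log N - x * log x) + (2 * γ - 1) * (N - x)| := by congr 1; ring
    _ ≤ _ := abs_add_three _ _ _
    _ ≤ 14 * √x := by linarith
end
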